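/- For κ > 0 and t ∈ [0,1), let q_κ(t) = P(|Z₀| ≤ κ, |Z_t| ≤ κ) where (Z₀, Z_t) is a centered bivariate Gaussian with unit variances and correlation t. Then q_κ is differentiable on [0,1) with q_κ'(t) = (1/π) · e^{-κ²/2} / √(1−t²) · ( e^{-κ²(1−t)/(2(1+t))} − e^{-κ²(1+t)/(2(1−t))} ). -/

import Mathlib

open MeasureTheory ProbabilityTheory

/-- `q κ t = P(|Z₀| ≤ κ, |Z_t| ≤ κ)` where `Z₀ = Z`, `Z_t = tZ + √(1−t²)Z'` with `Z, Z'`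
independent standard Gaussians. -/
noncomputable def qGauss (κ t : ℝ) : ℝ :=
  (((gaussianReal 0 1).prod (gaussianReal 0 1))
    {p : ℝ × ℝ | |p.1| ≤ κ ∧ |t * p.1 + Real.sqrt (1 - t ^ 2) * p.2| ≤ κ}).toReal

/-!
Conditioning on `Z = x`, the event `|Z_t| ≤ κ` becomes `Z' ∈ [(-κ - t x)/s, (κ - t x)/s]` with
`s = √(1 - t²)`, so `q_κ(t) = ∫_{-κ}^{κ} φ(x) (Φ((κ - t x)/s) - Φ((-κ - t x)/s)) dx`.
Differentiating under the integral, the `t`-derivative of `φ(x) Φ((c - t x)/s)` is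
`φ(x) φ((c - t x)/s) (t c - x)/s³`. Since `x² + ((c - t x)/s)² = c² + ((x - t c)/s)²`, this equals
`φ(c) φ((x - t c)/s) (t c - x)/s³`, the `x`-derivative of `φ(c) φ((x - t c)/s)/s`; hence the
integral over `[-κ, κ]` only involves the values at `x = ±κ`, which give the closed form.
-/

open Real Set Filter Topology

lemma MeasureTheory.measureReal_prod_apply {α β : Type*} [MeasurableSpace α] [MeasurableSpace β]
    (μ : Measure α) (ν : Measure β) [IsFiniteMeasure ν] {S : Set (α × β)} (hS : MeasurableSet S) :
    (μ.prod ν).real S = ∫ x, ν.real (Prod.mk x ⁻¹' S) ∂μ := by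
  rw [measureReal_def, Measure.prod_apply hS, ← integral_toReal
    (measurable_measure_prodMk_left hS).aemeasurable (ae_of_all _ fun _ => measure_lt_top _ _)]
  rfl

lemma Set.preimage_const_add_mul_Icc {s : ℝ} (hs : 0 < s) (u c d : ℝ) :
    (fun y => u + s * y) ⁻¹' Icc c d = Icc ((c - u) / s) ((d - u) / s) := by
  ext y
  simp only [mem_preimage, mem_Icc, div_le_iff₀ hs, le_div_iff₀ hs]
  constructor <;> rintro ⟨h₁, h₂⟩ <;> constructor <;> linarith

theorem hasDerivAt_setIntegral_Icc_of_continuousOn {F F' : ℝ → ℝ → ℝ} {U : Set ℝ} {t₀ a b : ℝ}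
    (hU : U ∈ 𝓝 t₀) (hF : ∀ t ∈ U, ContinuousOn (F t) (Icc a b))
    (hF' : ContinuousOn (Function.uncurry F') (U ×ˢ Icc a b))
    (hderiv : ∀ t ∈ U, ∀ x ∈ Icc a b, HasDerivAt (F · x) (F' t x) t) :
    HasDerivAt (fun t => ∫ x in Icc a b, F t x) (∫ x in Icc a b, F' t₀ x) t₀ := by
  obtain ⟨ε, hε, hεU⟩ := Metric.nhds_basis_closedBall.mem_iff.mp hU
  obtain ⟨C, hC⟩ := (isCompact_closedBall t₀ ε |>.prod isCompact_Icc).exists_bound_of_continuousOn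
    (hF'.mono (prod_mono hεU subset_rfl))
  have ht₀ : t₀ ∈ U := mem_of_mem_nhds hU
  refine (hasDerivAt_integral_of_dominated_loc_of_deriv_le (bound := fun _ => C)
    (Metric.ball_mem_nhds t₀ hε) ?_ ((hF t₀ ht₀).integrableOn_Icc)
    ((hF'.uncurry_left t₀ ht₀).aestronglyMeasurable measurableSet_Icc) ?_
    (integrableOn_const measure_Icc_lt_top.ne) ?_).2
  · filter_upwards [hU] with t ht using (hF t ht).aestronglyMeasurable measurableSet_Icc
  · filter_upwards [ae_restrict_mem measurableSet_Icc] with x hx t ht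
    exact hC (t, x) ⟨Metric.ball_subset_closedBall ht, hx⟩
  · filter_upwards [ae_restrict_mem measurableSet_Icc] with x hx t ht
    exact hderiv t (hεU (Metric.ball_subset_closedBall ht)) x hx

namespace ProbabilityTheory

@[fun_prop]
lemma continuous_gaussianPDFReal (μ : ℝ) (v : NNReal) : Continuous (gaussianPDFReal μ v) := by
  rw [gaussianPDFReal_def]; fun_prop

lemma hasDerivAt_gaussianPDFReal (μ : ℝ) (v : NNReal) (x : ℝ) :
    HasDerivAt (gaussianPDFReal μ v) (-(x - μ) / v * gaussianPDFReal μ v x) x := by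
  have h : HasDerivAt (fun x => -(x - μ) ^ 2 / (2 * (v : ℝ))) (-(x - μ) / v) x := by
    rcases eq_or_ne (v : ℝ) 0 with hv | hv
    · simpa [hv] using hasDerivAt_const x (0 : ℝ)
    refine ((((hasDerivAt_id' x).sub_const μ).pow 2).neg.div_const (2 * (v : ℝ))).congr_deriv ?_
    field_simp
    ring
  rw [gaussianPDFReal_def]
  exact (h.exp.const_mul (√(2 * π * v))⁻¹).congr_deriv (by ring)

lemma cdf_gaussianReal_sub (μ : ℝ) {v : NNReal} (hv : v ≠ 0) (a b : ℝ) :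
    cdf (gaussianReal μ v) b - cdf (gaussianReal μ v) a =
      ∫ y in a..b, gaussianPDFReal μ v y := by
  have hnonneg (x : ℝ) : 0 ≤ ∫ y in Iic x, gaussianPDFReal μ v y :=
    setIntegral_nonneg measurableSet_Iic fun y _ => gaussianPDFReal_nonneg μ v y
  rw [cdf_eq_real, cdf_eq_real, measureReal_def, measureReal_def,
    gaussianReal_apply_eq_integral μ hv, gaussianReal_apply_eq_integral μ hv,
    ENNReal.toReal_ofReal (hnonneg b), ENNReal.toReal_ofReal (hnonneg a),
    intervalIntegral.integral_Iic_sub_Iic (integrable_gaussianPDFReal μ v).integrableOn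
      (integrable_gaussianPDFReal μ v).integrableOn]

lemma gaussianReal_real_Icc (μ : ℝ) {v : NNReal} (hv : v ≠ 0) {a b : ℝ} (hab : a ≤ b) :
    (gaussianReal μ v).real (Icc a b) = cdf (gaussianReal μ v) b - cdf (gaussianReal μ v) a := by
  rw [measureReal_def, gaussianReal_apply_eq_integral μ hv, ENNReal.toReal_ofReal
    (setIntegral_nonneg measurableSet_Icc fun y _ => gaussianPDFReal_nonneg μ v y),
    integral_Icc_eq_integral_Ioc, ← intervalIntegral.integral_of_le hab, cdf_gaussianReal_sub μ hv]

lemma hasDerivAt_cdf_gaussianReal (μ : ℝ) {v : NNReal} (hv : v ≠ 0) (x : ℝ) :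
    HasDerivAt (cdf (gaussianReal μ v)) (gaussianPDFReal μ v x) x := by
  have hcdf : cdf (gaussianReal μ v) =
      fun u => cdf (gaussianReal μ v) 0 + ∫ y in (0 : ℝ)..u, gaussianPDFReal μ v y := by
    ext u; rw [← cdf_gaussianReal_sub μ hv]; ring
  rw [hcdf]
  exact ((continuous_gaussianPDFReal μ v).integral_hasStrictDerivAt 0 x).hasDerivAt.const_add _

lemma continuous_cdf_gaussianReal (μ : ℝ) {v : NNReal} (hv : v ≠ 0) :
    Continuous (cdf (gaussianReal μ v)) :=
  continuous_iff_continuousAt.2 fun x => (hasDerivAt_cdf_gaussianReal μ hv x).continuousAt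

end ProbabilityTheory

local notation "φ" => gaussianPDFReal 0 1
local notation "Φ" => cdf (gaussianReal 0 1)

lemma gaussianPDFReal_zero_one (y : ℝ) : φ y = (√(2 * π))⁻¹ * exp (-y ^ 2 / 2) := by
  simp [gaussianPDFReal]

lemma gaussianPDFReal_mul_gaussianPDFReal (x y : ℝ) :
    φ x * φ y = (2 * π)⁻¹ * exp (-(x ^ 2 + y ^ 2) / 2) := by
  rw [gaussianPDFReal_zero_one, gaussianPDFReal_zero_one, mul_mul_mul_comm, ← mul_inv,
    mul_self_sqrt (by positivity), ← exp_add]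
  ring_nf

noncomputable def condThreshold (t c x : ℝ) : ℝ := (c - t * x) / √(1 - t ^ 2)

lemma continuous_condThreshold (t c : ℝ) : Continuous (condThreshold t c) := by
  unfold condThreshold; fun_prop

lemma hasDerivAt_condThreshold (c x : ℝ) {t : ℝ} (ht : t ^ 2 < 1) :
    HasDerivAt (condThreshold · c x) ((t * c - x) / √(1 - t ^ 2) ^ 3) t := by
  have hpos : 0 < 1 - t ^ 2 := by linarith
  have hs : √(1 - t ^ 2) ≠ 0 := (sqrt_pos.mpr hpos).ne'
  have hsqrt : HasDerivAt (fun t => √(1 - t ^ 2)) (-(2 * t) / (2 * √(1 - t ^ 2))) t := by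
    simpa using ((hasDerivAt_pow 2 t).const_sub 1).sqrt hpos.ne'
  refine ((((hasDerivAt_id' t).mul_const x).const_sub c).div hsqrt hs).congr_deriv ?_
  field_simp
  rw [sq_sqrt hpos.le]
  ring

lemma hasDerivAt_condThreshold_left (t c x : ℝ) :
    HasDerivAt (condThreshold t · c) (√(1 - t ^ 2))⁻¹ x := by
  simpa [condThreshold] using ((hasDerivAt_id' x).sub_const (t * c)).div_const √(1 - t ^ 2)

lemma gaussianPDFReal_mul_condThreshold_comm {t : ℝ} (ht : t ^ 2 < 1) (c x : ℝ) :
    φ x * φ (condThreshold t c x) = φ c * φ (condThreshold t x c) := by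
  have hpos : 0 < 1 - t ^ 2 := by linarith
  simp only [gaussianPDFReal_mul_gaussianPDFReal, condThreshold, div_pow, sq_sqrt hpos.le]
  congr 3
  field_simp
  ring

lemma qGauss_eq_sub {κ t : ℝ} (hκ : 0 ≤ κ) (ht : t ^ 2 < 1) :
    qGauss κ t = (∫ x in Icc (-κ) κ, φ x * Φ (condThreshold t κ x)) -
      ∫ x in Icc (-κ) κ, φ x * Φ (condThreshold t (-κ) x) := by
  set S := {p : ℝ × ℝ | |p.1| ≤ κ ∧ |t * p.1 + √(1 - t ^ 2) * p.2| ≤ κ}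
  have hS : MeasurableSet S := by
    simp only [S, ofPred_and]
    exact (measurableSet_le (by fun_prop) measurable_const).inter
      (measurableSet_le (by fun_prop) measurable_const)
  have hslice (x : ℝ) : (gaussianReal 0 1).real (Prod.mk x ⁻¹' S) =
      (Icc (-κ) κ).indicator (fun x => Φ (condThreshold t κ x) - Φ (condThreshold t (-κ) x)) x := by
    by_cases hx : x ∈ Icc (-κ) κ
    · have : Prod.mk x ⁻¹' S = Icc (condThreshold t (-κ) x) (condThreshold t κ x) := by
        rw [condThreshold, condThreshold,
          ← preimage_const_add_mul_Icc (sqrt_pos.mpr (by linarith : 0 < 1 - t ^ 2))]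
        ext y
        simp [S, abs_le, hx.1, hx.2]
      rw [this, indicator_of_mem hx, gaussianReal_real_Icc 0 one_ne_zero]
      exact div_le_div_of_nonneg_right (by linarith) (sqrt_nonneg _)
    · have : Prod.mk x ⁻¹' S = ∅ := by
        have hx' : ¬|x| ≤ κ := by rwa [abs_le]
        ext y
        simp [S, hx']
      rw [this, indicator_of_notMem hx, measureReal_empty]
  have hint (c : ℝ) : IntegrableOn (fun x => φ x * Φ (condThreshold t c x)) (Icc (-κ) κ) :=
    ((continuous_gaussianPDFReal 0 1).mul ((continuous_cdf_gaussianReal 0 one_ne_zero).comp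
      (continuous_condThreshold t c))).integrableOn_Icc
  rw [qGauss, ← measureReal_def, measureReal_prod_apply _ _ hS]
  simp_rw [hslice, integral_gaussianReal_eq_integral_smul one_ne_zero, smul_eq_mul,
    ← indicator_mul_right, integral_indicator measurableSet_Icc, mul_sub]
  exact integral_sub (hint κ) (hint (-κ))

lemma integral_pdf_mul_pdf_condThreshold {t : ℝ} (ht : t ^ 2 < 1) (c : ℝ) {a b : ℝ}
    (hab : a ≤ b) :
    ∫ x in Icc a b, φ x * (φ (condThreshold t c x) * ((t * c - x) / √(1 - t ^ 2) ^ 3)) =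
      φ c * (φ (condThreshold t b c) - φ (condThreshold t a c)) / √(1 - t ^ 2) := by
  have hs : √(1 - t ^ 2) ≠ 0 := (sqrt_pos.mpr (by linarith)).ne'
  have hderiv (x : ℝ) : HasDerivAt (fun x => φ c * φ (condThreshold t x c) / √(1 - t ^ 2))
      (φ x * (φ (condThreshold t c x) * ((t * c - x) / √(1 - t ^ 2) ^ 3))) x := by
    refine ((((hasDerivAt_gaussianPDFReal 0 1 _).comp x
      (hasDerivAt_condThreshold_left t c x)).const_mul (φ c)).div_const _).congr_deriv ?_
    rw [← mul_assoc (φ x), gaussianPDFReal_mul_condThreshold_comm ht]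
    simp only [condThreshold, NNReal.coe_one, sub_zero, div_one]
    field_simp
    ring
  have hcont : Continuous fun x =>
      φ x * (φ (condThreshold t c x) * ((t * c - x) / √(1 - t ^ 2) ^ 3)) := by
    unfold condThreshold; fun_prop
  rw [integral_Icc_eq_integral_Ioc, ← intervalIntegral.integral_of_le hab,
    intervalIntegral.integral_eq_sub_of_hasDerivAt (fun x _ => hderiv x)
      (hcont.intervalIntegrable _ _)]
  ring

lemma hasDerivAt_integral_pdf_mul_cdf_condThreshold (c : ℝ) {a b t : ℝ} (hab : a ≤ b)
    (ht : t ^ 2 < 1) :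
    HasDerivAt (fun t => ∫ x in Icc a b, φ x * Φ (condThreshold t c x))
      (φ c * (φ (condThreshold t b c) - φ (condThreshold t a c)) / √(1 - t ^ 2)) t := by
  rw [← integral_pdf_mul_pdf_condThreshold ht c hab]
  refine hasDerivAt_setIntegral_Icc_of_continuousOn (U := {t | t ^ 2 < 1})
    ((isOpen_lt (by fun_prop) (by fun_prop)).mem_nhds ht) (fun t _ => ?_) ?_
    (fun t ht x _ => ((hasDerivAt_cdf_gaussianReal 0 one_ne_zero _).comp t
      (hasDerivAt_condThreshold c x ht)).const_mul (φ x))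
  · exact ((continuous_gaussianPDFReal 0 1).mul ((continuous_cdf_gaussianReal 0 one_ne_zero).comp
      (continuous_condThreshold t c))).continuousOn
  · have hs : ∀ p ∈ {t : ℝ | t ^ 2 < 1} ×ˢ Icc a b, √(1 - p.1 ^ 2) ≠ 0 :=
      fun p hp => (sqrt_pos.mpr (by linarith [hp.1.out])).ne'
    have hthr : ContinuousOn (fun p : ℝ × ℝ => (c - p.1 * p.2) / √(1 - p.1 ^ 2))
        ({t : ℝ | t ^ 2 < 1} ×ˢ Icc a b) :=
      .div (by fun_prop) (by fun_prop) hs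
    have hslope : ContinuousOn (fun p : ℝ × ℝ => (p.1 * c - p.2) / √(1 - p.1 ^ 2) ^ 3)
        ({t : ℝ | t ^ 2 < 1} ×ˢ Icc a b) :=
      .div (by fun_prop) (by fun_prop) fun p hp => pow_ne_zero 3 (hs p hp)
    exact ((continuous_gaussianPDFReal 0 1).comp_continuousOn continuousOn_snd).mul
      (((continuous_gaussianPDFReal 0 1).comp_continuousOn hthr).mul hslope)

lemma boundary_terms_eq_closed_form {κ t : ℝ} (ht : t ^ 2 < 1) :
    φ κ * (φ (condThreshold t κ κ) - φ (condThreshold t (-κ) κ)) / √(1 - t ^ 2) -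
      φ (-κ) * (φ (condThreshold t κ (-κ)) - φ (condThreshold t (-κ) (-κ))) / √(1 - t ^ 2) =
    (1 / π) * exp (-κ ^ 2 / 2) / √(1 - t ^ 2) *
      (exp (-κ ^ 2 * (1 - t) / (2 * (1 + t))) - exp (-κ ^ 2 * (1 + t) / (2 * (1 - t)))) := by
  have h₁ : 1 - t ≠ 0 := by nlinarith
  have h₂ : 1 + t ≠ 0 := by nlinarith
  have hs : √(1 - t ^ 2) ^ 2 = (1 - t) * (1 + t) := by rw [sq_sqrt (by linarith)]; ring
  have hnear (c d : ℝ) (h : (c - t * d) ^ 2 = κ ^ 2 * (1 - t) ^ 2) :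
      -condThreshold t c d ^ 2 / 2 = -κ ^ 2 * (1 - t) / (2 * (1 + t)) := by
    rw [condThreshold, div_pow, hs, h]; field_simp
  have hfar (c d : ℝ) (h : (c - t * d) ^ 2 = κ ^ 2 * (1 + t) ^ 2) :
      -condThreshold t c d ^ 2 / 2 = -κ ^ 2 * (1 + t) / (2 * (1 - t)) := by
    rw [condThreshold, div_pow, hs, h]; field_simp
  simp only [gaussianPDFReal_zero_one, neg_sq]
  rw [hnear κ κ (by ring), hfar (-κ) κ (by ring), hfar κ (-κ) (by ring),
    hnear (-κ) (-κ) (by ring)]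
  calc _ = 2 * ((√(2 * π))⁻¹ * (√(2 * π))⁻¹) * exp (-κ ^ 2 / 2) / √(1 - t ^ 2) *
        (exp (-κ ^ 2 * (1 - t) / (2 * (1 + t))) - exp (-κ ^ 2 * (1 + t) / (2 * (1 - t)))) := by
        ring
    _ = _ := by
        rw [← mul_inv, mul_self_sqrt (by positivity)]
        field_simp

/-- For `κ > 0`, the map `t ↦ q_κ(t)` is differentiable on `[0,1)` with derivative
`(1/π)·e^{-κ²/2}/√(1−t²)·(e^{-κ²(1−t)/(2(1+t))} − e^{-κ²(1+t)/(2(1−t))})`. -/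
theorem stmt2 (κ : ℝ) (hκ : 0 < κ) :
    ∀ t ∈ Set.Ico (0 : ℝ) 1,
      HasDerivAt (qGauss κ)
        ((1 / Real.pi) * Real.exp (-κ ^ 2 / 2) / Real.sqrt (1 - t ^ 2) *
          (Real.exp (-κ ^ 2 * (1 - t) / (2 * (1 + t))) -
            Real.exp (-κ ^ 2 * (1 + t) / (2 * (1 - t))))) t := by
  rintro t ⟨ht₀, ht₁⟩
  have ht : t ^ 2 < 1 := by nlinarith
  have hab : -κ ≤ κ := by linarith
  have hq : qGauss κ =ᶠ[𝓝 t] fun t => (∫ x in Icc (-κ) κ, φ x * Φ (condThreshold t κ x)) -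
      ∫ x in Icc (-κ) κ, φ x * Φ (condThreshold t (-κ) x) := by
    filter_upwards [(continuous_pow 2).continuousAt.eventually_lt continuousAt_const ht]
      with t ht using qGauss_eq_sub hκ.le ht
  rw [← boundary_terms_eq_closed_form ht]
  exact ((hasDerivAt_integral_pdf_mul_cdf_condThreshold κ hab ht).sub
    (hasDerivAt_integral_pdf_mul_cdf_condThreshold (-κ) hab ht)).congr_of_eventuallyEq hq
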